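/- arXiv:1106.1240 — 7 statements merged into one kernel-verified Lean document; each statement's English description precedes it below -/
import Mathlib

section
/- If ψ is a linear-time safety word property over the alphabet O × I, then the spreading S_{I/O}(ψ) is a reactive safety (I/O-safety) tree property. -/
variable {I O : Type}

/-- Path word of a full `O`-labeled `I`-tree along an infinite input sequence. -/
def PathWord (τ : List I → O) (t : ℕ → I) : ℕ → O × I :=
  fun n => (τ ((List.range n).map t), t n)

/-- The spreading of a word property: trees all of whose path words are in `ψ`. -/
def Spread (ψ : Set (ℕ → O × I)) : Set (List I → O) :=
  {τ | ∀ t : ℕ → I, PathWord τ t ∈ ψ}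

/-- Linear-time safety for word properties. -/
def LinearSafety {A : Type} (ψ : Set (ℕ → A)) : Prop :=
  ∀ w ∉ ψ, ∃ k : ℕ, ∀ w' : ℕ → A, (∀ i ≤ k, w' i = w i) → w' ∉ ψ

/-- `t` is a violation starting node of `τ` w.r.t. tree property `P`:
every full tree agreeing with `τ` on all proper prefixes of `t` is not in `P`. -/
def ViolationNode (P : Set (List I → O)) (τ : List I → O) (t : List I) : Prop :=
  ∀ τ' : List I → O, (∀ s : List I, s <+: t → s ≠ t → τ' s = τ s) → τ' ∉ P

/-- Reactive (I/O) safety for tree properties. -/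
def IOSafety (P : Set (List I → O)) : Prop :=
  ∀ τ ∉ P, ∃ t : List I, ViolationNode P τ t

/-- Universal (branching-time) safety for tree properties. -/
def UnivSafety (P : Set (List I → O)) : Prop :=
  ∀ τ ∉ P, ∃ T' : Finset (List I),
    (∀ s ∈ T', ∀ u : List I, u <+: s → u ∈ T') ∧
    ∀ τ' : List I → O, (∀ s ∈ T', τ' s = τ s) → τ' ∉ P

theorem spreading_of_linear_safety_is_reactive_safety
    [Fintype I] [Fintype O] [Nonempty I] [Nonempty O]
    (ψ : Set (ℕ → O × I)) (hψ : LinearSafety ψ) :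
    IOSafety (Spread (I := I) (O := O) ψ) := by
  intro τ hτ
  simp only [Spread, Set.mem_setOf_eq, not_forall] at hτ
  obtain ⟨t, ht⟩ := hτ
  obtain ⟨k, hk⟩ := hψ _ ht
  refine ⟨(List.range (k + 1)).map t, ?_⟩
  intro τ' hagree hτ'
  refine hk (PathWord τ' t) ?_ (hτ' t)
  intro i hi
  have hr : List.range i <+: List.range (k + 1) := by
    rw [show List.range i = (List.range (k + 1)).take i by
      rw [List.take_range]; congr 1; omega]
    exact List.take_prefix _ _
  have hpre : (List.range i).map t <+: (List.range (k + 1)).map t := hr.map t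
  have hne : (List.range i).map t ≠ (List.range (k + 1)).map t := by
    intro h
    have := congrArg List.length h
    simp at this; omega
  simp only [PathWord, hagree _ hpre hne]
end

section
/- Let I = O = Bool and let θ be the set of full O-labeled I-trees τ with τ([0]) ≠ τ([1]). Then θ is a universal safety property but not a reactive safety (I/O-safety) property. -/
variable {I O : Type}

theorem theta_universal_but_not_reactive :
    UnivSafety {τ : List Bool → Bool | τ [false] ≠ τ [true]} ∧
    ¬ IOSafety {τ : List Bool → Bool | τ [false] ≠ τ [true]} := by
  constructor
  · intro τ hτ
    simp only [Set.mem_setOf_eq, not_not] at hτ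
    refine ⟨{[], [false], [true]}, ?_, ?_⟩
    · intro s hs u hu
      simp only [Finset.mem_insert, Finset.mem_singleton] at hs ⊢
      obtain ⟨r, hr⟩ := hu
      rcases hs with rfl | rfl | rfl
      · left; cases u <;> simp_all
      · cases u with
        | nil => left; rfl
        | cons a l =>
          cases l with
          | nil => right; left; injection hr with h1 _; subst h1; rfl
          | cons b m => simp at hr
      · cases u with
        | nil => left; rfl
        | cons a l =>
          cases l with
          | nil => right; right; injection hr with h1 _; subst h1; rfl
          | cons b m => simp at hr
    · intro τ' h hP
      have h1 : τ' [false] = τ [false] := h _ (by simp)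
      have h2 : τ' [true] = τ [true] := h _ (by simp)
      simp only [Set.mem_setOf_eq] at hP
      rw [h1, h2] at hP
      exact hP hτ
  · intro h
    obtain ⟨t, ht⟩ := h (fun _ => false) (by simp)
    by_cases hc : [true] <+: t ∧ [true] ≠ t
    · refine ht (fun s => if s = [false] then true else false) ?_ (by simp)
      intro s hs hne
      simp only
      rw [if_neg]
      rintro rfl
      obtain ⟨r, hr⟩ := hs
      obtain ⟨r', hr'⟩ := hc.1
      rw [← hr'] at hr
      simp at hr
    · refine ht (fun s => if s = [true] then true else false) ?_ (by simp)
      intro s hs hne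
      simp only
      rw [if_neg]
      rintro rfl
      exact hne (not_ne_iff.mp (not_and.mp hc hs))
end

section
/- A tree property P over full O-labeled I-trees is an I/O-safety property if and only if there exists a linear-time safety word property ψ' ⊆ (O × I)^ω such that P equals the spreading S_{I/O}(ψ'), i.e., P consists precisely of the trees all of whose infinite paths lie in ψ'. -/
variable {I O : Type}

theorem reactive_safety_iff_spreading_of_linear_safety
    [Fintype I] [Fintype O] [Nonempty I] [Nonempty O]
    (P : Set (List I → O)) :
    IOSafety P ↔
      ∃ ψ' : Set (ℕ → O × I), LinearSafety ψ' ∧ P = Spread ψ' := by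
  constructor
  · intro hP
    refine ⟨{w | ∀ k, ∃ τ ∈ P, ∃ t : ℕ → I, ∀ i ≤ k, PathWord τ t i = w i}, ?_, ?_⟩
    · intro w hw
      simp only [Set.mem_setOf_eq, not_forall] at hw
      obtain ⟨k, hk⟩ := hw
      refine ⟨k, fun w' hw' hmem => hk ?_⟩
      obtain ⟨τ, hτ, t, ht⟩ := hmem k
      exact ⟨τ, hτ, t, fun i hi => (ht i hi).trans (hw' i hi)⟩
    · ext τ
      constructor
      · intro hτ t k
        exact ⟨τ, hτ, t, fun i _ => rfl⟩
      · intro hτ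
        by_contra hτP
        obtain ⟨t, hviol⟩ := hP τ hτP
        set tExt : ℕ → I := fun n => t.getD n (Classical.arbitrary I) with htExtdef
        obtain ⟨τ', hτ'P, t', ht'⟩ := hτ tExt t.length
        have hfst : ∀ i ≤ t.length, τ' ((List.range i).map t') = τ ((List.range i).map tExt) :=
          fun i hi => congrArg Prod.fst (ht' i hi)
        have hsnd : ∀ i ≤ t.length, t' i = tExt i :=
          fun i hi => congrArg Prod.snd (ht' i hi)
        have hmapeq : ∀ i ≤ t.length, (List.range i).map t' = (List.range i).map tExt := by
          intro i hi
          apply List.map_congr_left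
          intro a ha
          exact hsnd a (le_trans (le_of_lt (List.mem_range.mp ha)) hi)
        have htake : ∀ i ≤ t.length, (List.range i).map tExt = t.take i := by
          intro i hi
          apply List.ext_getElem
          · simp [hi]
          · intro j hj1 hj2
            simp only [List.length_map, List.length_range] at hj1
            simp only [List.getElem_map, List.getElem_range, List.getElem_take, htExtdef]
            exact List.getD_eq_getElem t _ (lt_of_lt_of_le hj1 hi)
        refine hviol τ' ?_ hτ'P
        intro s hs hne
        have hslen : s.length < t.length := by
          rcases lt_or_eq_of_le hs.length_le with h | h
          · exact h
          · exact absurd (List.IsPrefix.eq_of_length hs h) hne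
        have hseq : s = t.take s.length := by
          rw [List.prefix_iff_eq_take] at hs; exact hs
        have hle : s.length ≤ t.length := le_of_lt hslen
        calc τ' s = τ' ((List.range s.length).map t') := by
              rw [hmapeq _ hle, htake _ hle, ← hseq]
          _ = τ ((List.range s.length).map tExt) := hfst _ hle
          _ = τ s := by rw [htake _ hle, ← hseq]
  · rintro ⟨ψ', hψ, rfl⟩
    intro τ hτ
    simp only [Spread, Set.mem_setOf_eq, not_forall] at hτ
    obtain ⟨t, ht⟩ := hτ
    obtain ⟨k, hk⟩ := hψ _ ht
    refine ⟨(List.range (k+1)).map t, ?_⟩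
    intro τ' hagree hmem
    refine hk (PathWord τ' t) ?_ (hmem t)
    intro i hi
    unfold PathWord
    have h1 : (List.range i).map t <+: (List.range (k+1)).map t := by
      refine List.IsPrefix.map t ?_
      have : (List.range (k+1)).take i = List.range i := by
        rw [List.take_range]
        congr 1
        omega
      rw [← this]
      exact List.take_prefix _ _
    have h2 : (List.range i).map t ≠ (List.range (k+1)).map t := by
      intro h
      have := congrArg List.length h
      simp at this
      omega
    rw [hagree _ h1 h2]
end

section
/- A tree property P over full O-labeled I-trees is an I/O-safety property if and only if there exists a word property ψ' ⊆ (O × I)^ω (not necessarily safe) such that P equals the set of trees all of whose infinite paths lie in ψ', and moreover in that case ψ' can be chosen to be a linear-time safety property. -/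
variable {I O : Type}

theorem reactive_safety_iff_all_paths_in_some_safety_word_property
    [Fintype I] [Fintype O] [Nonempty I] [Nonempty O]
    (P : Set (List I → O)) :
    (IOSafety P ↔ ∃ ψ' : Set (ℕ → O × I), LinearSafety ψ' ∧ P = Spread ψ') := by
  constructor
  · intro hP
    refine ⟨{ w | ∀ k : ℕ, ∃ τ ∈ P,
        ∀ j ≤ k, τ ((List.range j).map (fun n => (w n).2)) = (w j).1 }, ?_, ?_⟩
    · -- LinearSafety
      intro w hw
      have hw' : ∃ k : ℕ, ∀ τ ∈ P,
          ∃ j ≤ k, τ ((List.range j).map (fun n => (w n).2)) ≠ (w j).1 := by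
        by_contra hc
        push_neg at hc
        exact hw fun k => by
          obtain ⟨τ, hτP, hτ⟩ := hc k
          exact ⟨τ, hτP, hτ⟩
      obtain ⟨k, hk⟩ := hw'
      refine ⟨k, fun w' hw' hmem => ?_⟩
      obtain ⟨τ, hτP, hτ⟩ := hmem k
      obtain ⟨j, hj, hne⟩ := hk τ hτP
      apply hne
      have hlist : (List.range j).map (fun n => (w n).2)
          = (List.range j).map (fun n => (w' n).2) := by
        apply List.map_congr_left
        intro a ha
        rw [hw' a (le_of_lt (lt_of_lt_of_le (List.mem_range.1 ha) hj))]
      rw [hlist, hτ j hj, hw' j hj]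
    · -- P = Spread ψ'
      ext τ
      constructor
      · intro hτ t k
        refine ⟨τ, hτ, fun j _ => ?_⟩
        simp [PathWord]
      · intro hτ
        by_contra hτP
        obtain ⟨t₀, hviol⟩ := hP τ hτP
        set t : ℕ → I := fun n => if h : n < t₀.length then t₀[n] else Classical.arbitrary I with ht
        have hpre : ∀ s : List I, s <+: t₀ → s = (List.range s.length).map t := by
          intro s hs
          apply List.ext_getElem (by simp)
          intro i hi hi'
          have hlen : i < t₀.length := lt_of_lt_of_le hi hs.length_le
          simp [ht, hlen, hs.getElem hi]
        have := hτ t t₀.length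
        obtain ⟨τ', hτ'P, hτ'⟩ := this
        refine hviol τ' ?_ hτ'P
        intro s hs hne
        have hlt : s.length < t₀.length := by
          rcases lt_or_eq_of_le hs.length_le with h | h
          · exact h
          · exact absurd (hs.eq_of_length h) hne
        have := hτ' s.length (le_of_lt hlt)
        simp only [PathWord] at this
        rw [hpre s hs]
        exact this
  · rintro ⟨ψ', hsafe, rfl⟩
    intro τ hτ
    have : ∃ t : ℕ → I, PathWord τ t ∉ ψ' := by
      by_contra hc
      push_neg at hc
      exact hτ hc
    obtain ⟨t, ht⟩ := this
    obtain ⟨k, hk⟩ := hsafe _ ht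
    refine ⟨(List.range (k + 1)).map t, fun τ' hagree hmem => ?_⟩
    refine hk (PathWord τ' t) (fun i hi => ?_) (hmem t)
    have hpre : (List.range i).map t <+: (List.range (k + 1)).map t :=
      (List.prefix_iff_eq_take.2 (by simp [List.take_range, Nat.min_eq_left (Nat.le_succ_of_le hi)])).map t
    have hne : (List.range i).map t ≠ (List.range (k + 1)).map t := by
      intro h
      have := congrArg List.length h
      simp at this
      omega
    simp only [PathWord, Prod.mk.injEq]
    exact ⟨hagree _ hpre hne, trivial⟩
end

section
/- If ψ ⊆ (O × I)^ω is a word property such that its spreading S_{I/O}(ψ) is an I/O-safety tree property, and ψ' is the set of all infinite paths of trees in S_{I/O}(ψ), then ψ' is a linear-time safety word property and S_{I/O}(ψ') = S_{I/O}(ψ). -/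
variable {I O : Type}

theorem paths_of_reactive_safe_spreading_form_linear_safety
    [Fintype I] [Fintype O] [Nonempty I] [Nonempty O]
    (ψ : Set (ℕ → O × I)) (h : IOSafety (Spread (I := I) (O := O) ψ)) :
    LinearSafety {w : ℕ → O × I | ∃ τ ∈ Spread (I := I) (O := O) ψ,
        ∃ t : ℕ → I, w = PathWord τ t} ∧
    Spread {w : ℕ → O × I | ∃ τ ∈ Spread (I := I) (O := O) ψ,
        ∃ t : ℕ → I, w = PathWord τ t} = Spread ψ := by
  set ψ' : Set (ℕ → O × I) := {w : ℕ → O × I | ∃ τ ∈ Spread (I := I) (O := O) ψ,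
        ∃ t : ℕ → I, w = PathWord τ t} with hψ'
  constructor
  · -- Linear safety
    intro w hw
    by_contra hc
    push_neg at hc
    choose w' hagree hmem using hc
    simp only [hψ', Set.mem_setOf_eq] at hmem
    choose τk hτk tk heqk using hmem
    set U : Ultrafilter ℕ := Ultrafilter.of Filter.atTop with hU
    set i : ℕ → I := fun n => (w n).2 with hi
    -- ultrafilter limit of the trees τk
    have key : ∀ s : List I, ∃ o : O, {k | τk k s = o} ∈ U := by
      intro s
      have huniv : (⋃ o ∈ (Set.univ : Set O), {k | τk k s = o}) ∈ U := by
        have : (⋃ o ∈ (Set.univ : Set O), {k | τk k s = o}) = Set.univ := by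
          ext k; simp
        rw [this]; exact Filter.univ_mem
      rw [Ultrafilter.finite_biUnion_mem_iff Set.finite_univ] at huniv
      obtain ⟨o, _, ho⟩ := huniv
      exact ⟨o, ho⟩
    set τlim : List I → O := fun s => (key s).choose with hτlimdef
    have hτlim : ∀ s, {k | τk k s = τlim s} ∈ U := fun s => (key s).choose_spec
    -- finite agreement extraction
    have hfind : ∀ (L : List (List I)) (m : ℕ),
        ∃ k, m ≤ k ∧ ∀ s ∈ L, τk k s = τlim s := by
      intro L m
      have h1 : {k | ∀ s ∈ L, τk k s = τlim s} ∈ U := by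
        induction L with
        | nil => exact Filter.univ_mem' (by simp)
        | cons a L ih =>
          refine Filter.mem_of_superset (Filter.inter_mem (hτlim a) ih) ?_
          rintro k ⟨hk1, hk2⟩ s hs
          rcases List.mem_cons.mp hs with rfl | hs
          · exact hk1
          · exact hk2 s hs
      have h2 : {k | m ≤ k} ∈ U := Ultrafilter.of_le Filter.atTop (Filter.mem_atTop m)
      obtain ⟨k, hk⟩ := Filter.nonempty_of_mem (Filter.inter_mem h1 h2)
      exact ⟨k, hk.2, hk.1⟩
    -- component facts from the agreement hypotheses
    have hcomp : ∀ k m, m ≤ k →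
        τk k ((List.range m).map (tk k)) = (w m).1 ∧ tk k m = i m := by
      intro k m hm
      have hh := hagree k m hm
      rw [heqk k] at hh
      exact ⟨congrArg Prod.fst hh, congrArg Prod.snd hh⟩
    have hmapeq : ∀ k m, m ≤ k →
        (List.range m).map (tk k) = (List.range m).map i := by
      intro k m hm
      refine List.map_congr_left ?_
      intro j hj
      have hjm : j < m := List.mem_range.mp hj
      exact (hcomp k j (le_trans (Nat.le_of_lt hjm) hm)).2
    -- τlim's path along i is w
    have hpath : ∀ m, τlim ((List.range m).map i) = (w m).1 := by
      intro m
      obtain ⟨k, hmk, hk⟩ := hfind [(List.range m).map i] m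
      have h1 := hk _ (List.mem_singleton_self _)
      have h2 := (hcomp k m hmk).1
      rw [hmapeq k m hmk] at h2
      rw [← h1, h2]
    have hτnot : τlim ∉ Spread (I := I) (O := O) ψ := by
      intro hmemlim
      apply hw
      refine ⟨τlim, hmemlim, i, ?_⟩
      funext n
      show w n = (τlim ((List.range n).map i), i n)
      rw [hpath n]
    obtain ⟨t, hviol⟩ := h τlim hτnot
    obtain ⟨k, _, hk⟩ := hfind t.inits 0
    exact hviol (τk k) (fun s hs _ => hk s ((List.mem_inits _ _).mpr hs)) (hτk k)
  · -- Spread ψ' = Spread ψ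
    ext τ
    constructor
    · intro hτ t
      obtain ⟨τ', hτ', t', heq⟩ := hτ t
      rw [heq]
      exact hτ' t'
    · intro hτ t
      exact ⟨τ, hτ, t, rfl⟩
end

section
/- Every tree language recognized by a deterministic safety tree automaton with directions I and labels O is an I/O-safety property. -/
variable {I O : Type}

/-- A deterministic safety tree automaton with directions `I` and labels `O`. -/
structure DSTA (I O : Type) where
  Q : Type
  [fin : Fintype Q]
  δ : Q → O → Option (I → Q)
  q0 : Q

/-- Acceptance of a full `O`-labeled `I`-tree. -/
def DSTA.Accepts {I O : Type} (M : DSTA I O) (τ : List I → O) : Prop :=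
  ∃ ρ : List I → M.Q, ρ [] = M.q0 ∧
    ∀ t : List I, ∃ f : I → M.Q,
      M.δ (ρ t) (τ t) = some f ∧ ∀ x : I, ρ (t ++ [x]) = f x

/-!
A run of a deterministic automaton is forced: its state at a node `t` depends only on the labels
at the proper prefixes of `t`. Suppose `τ` is rejected but no node is a violation node. Then every
node `t` has an accepted tree `τₜ` agreeing with `τ` strictly below `t`, with run `ρₜ`. By
determinism the states `ρₜ t` fit together into a run on `τ`, a contradiction.
-/

theorem List.IsPrefix.ne_concat {α : Type*} {s t : List α} (h : s <+: t) (x : α) :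
    s ≠ t ++ [x] :=
  ne_of_apply_ne List.length (by simpa using Nat.ne_of_lt (Nat.lt_succ_of_le h.length_le))

namespace DSTA

variable (M : DSTA I O)

def IsRun (τ : List I → O) (ρ : List I → M.Q) : Prop :=
  ρ [] = M.q0 ∧ ∀ t, ∃ f, M.δ (ρ t) (τ t) = some f ∧ ∀ x, ρ (t ++ [x]) = f x

variable {M}

theorem accepts_iff_exists_isRun {τ : List I → O} : M.Accepts τ ↔ ∃ ρ, M.IsRun τ ρ :=
  Iff.rfl

theorem IsRun.eq_of_eq_below {τ₁ τ₂ : List I → O} {ρ₁ ρ₂ : List I → M.Q}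
    (h₁ : M.IsRun τ₁ ρ₁) (h₂ : M.IsRun τ₂ ρ₂) {t : List I}
    (hτ : ∀ s, s <+: t → s ≠ t → τ₁ s = τ₂ s) : ρ₁ t = ρ₂ t := by
  induction t using List.reverseRecOn with
  | nil => rw [h₁.1, h₂.1]
  | append_singleton t x ih =>
    have hτ_le : ∀ s, s <+: t → τ₁ s = τ₂ s := fun s hs =>
      hτ s (hs.trans (List.prefix_append t [x])) (hs.ne_concat x)
    obtain ⟨f₁, hf₁, hx₁⟩ := h₁.2 t
    obtain ⟨f₂, hf₂, hx₂⟩ := h₂.2 t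
    have hf : f₁ = f₂ := Option.some_injective _ <| by
      rw [← hf₁, ← hf₂, ih fun s hs _ => hτ_le s hs, hτ_le t List.prefix_rfl]
    rw [hx₁, hx₂, hf]

theorem isRun_diag [Nonempty I] {τ : List I → O} {τ' : List I → List I → O}
    {ρ : List I → List I → M.Q} (hρ : ∀ t, M.IsRun (τ' t) (ρ t))
    (hτ' : ∀ t s, s <+: t → s ≠ t → τ' t s = τ s) : M.IsRun τ (fun t => ρ t t) := by
  have hτ'_concat : ∀ t x s, s <+: t → τ' (t ++ [x]) s = τ s := fun t x s hs =>
    hτ' _ s (hs.trans (List.prefix_append t [x])) (hs.ne_concat x)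
  have hρ_concat : ∀ t x, ρ (t ++ [x]) t = ρ t t := fun t x =>
    (hρ _).eq_of_eq_below (hρ t) fun s hs hne =>
      (hτ'_concat t x s hs).trans (hτ' t s hs hne).symm
  have step : ∀ t x, ∃ f, M.δ (ρ t t) (τ t) = some f ∧ ρ (t ++ [x]) (t ++ [x]) = f x :=
    fun t x => by
      obtain ⟨f, hf, hfx⟩ := (hρ (t ++ [x])).2 t
      rw [hρ_concat, hτ'_concat t x t List.prefix_rfl] at hf
      exact ⟨f, hf, hfx x⟩
  refine ⟨(hρ []).1, fun t => ?_⟩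
  obtain ⟨f, hf, -⟩ := step t (Classical.arbitrary I)
  refine ⟨f, hf, fun x => ?_⟩
  obtain ⟨g, hg, hgx⟩ := step t x
  show ρ (t ++ [x]) (t ++ [x]) = f x
  rw [hgx, Option.some_injective _ (hg.symm.trans hf)]

end DSTA

theorem safety_tree_automaton_language_is_reactive_safety_general
    [Nonempty I]
    (M : DSTA I O) :
    IOSafety {τ : List I → O | M.Accepts τ} := by
  intro τ hτ
  by_contra! hsafe
  have hwitness : ∀ t, ∃ τ' : List I → O,
      (∀ s, s <+: t → s ≠ t → τ' s = τ s) ∧ ∃ ρ, M.IsRun τ' ρ := by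
    simpa [ViolationNode, DSTA.accepts_iff_exists_isRun] using hsafe
  choose τ' hτ' ρ hρ using hwitness
  exact hτ (DSTA.accepts_iff_exists_isRun.2 ⟨_, DSTA.isRun_diag hρ hτ'⟩)

theorem safety_tree_automaton_language_is_reactive_safety
    [Fintype I] [Fintype O] [Nonempty I] [Nonempty O]
    (M : DSTA I O) :
    IOSafety {τ : List I → O | M.Accepts τ} :=
  safety_tree_automaton_language_is_reactive_safety_general M
end

section
/- If ψ ⊆ (O × I)^ω is a linear-time safety property, then for every full tree τ ∉ S_{I/O}(ψ) there exists a violating path t : ℕ → I and an index k such that the node t₀…t_k is a violation starting node of τ with respect to S_{I/O}(ψ), and moreover the finite prefix path of τ along t₀…t_k is a bad prefix for ψ (no infinite word extending it is in ψ). -/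
variable {I O : Type}

theorem linear_safety_gives_violation_node_and_bad_prefix
    [Fintype I] [Fintype O] [Nonempty I] [Nonempty O]
    (ψ : Set (ℕ → O × I)) (hψ : LinearSafety ψ)
    (τ : List I → O) (hτ : τ ∉ Spread (I := I) (O := O) ψ) :
    ∃ (t : ℕ → I) (k : ℕ),
      PathWord τ t ∉ ψ ∧
      ViolationNode (Spread ψ) τ ((List.range (k + 1)).map t) ∧
      ∀ w' : ℕ → O × I, (∀ i ≤ k, w' i = PathWord τ t i) → w' ∉ ψ := by
  simp only [Spread, Set.mem_setOf_eq, not_forall] at hτ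
  obtain ⟨t, ht⟩ := hτ
  obtain ⟨k, hk⟩ := hψ _ ht
  refine ⟨t, k, ht, ?_, hk⟩
  intro τ' hτ' hmem
  refine hk (PathWord τ' t) ?_ (hmem t)
  intro i hi
  have hlen : ((List.range (i)).map t).length = i := by simp
  have hpre : (List.range i).map t <+: (List.range (k+1)).map t := by
    refine List.IsPrefix.map t ?_
    rw [show List.range i = List.take i (List.range (k+1)) by
      rw [List.take_range]; congr 1; omega]
    exact List.take_prefix _ _
  have hne : (List.range i).map t ≠ (List.range (k+1)).map t := by
    intro h
    have := congrArg List.length h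
    simp at this
    omega
  simp only [PathWord]
  rw [hτ' _ hpre hne]
end
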